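/- arXiv:1910.06406 — 6 statements merged into one kernel-verified Lean document; each statement's English description precedes it below -/
import Mathlib

section
/- Let N ≥ 2. Then ℝ^N can be covered by countably many clouds; that is, there exists a countable family (C_i)_{i ∈ ℕ} of clouds in ℝ^N whose union is all of ℝ^N. -/
/-!
Fix a line `E`, a point `b ∉ E` and distinct centres `c₀, c₁, …` on `E`. The line `E` is a cloud
around `b`, so it suffices to colour the points off `E` by `ℕ` so that every line through `cᵢ`
contains only finitely many points of colour `i`. This is done by induction on the cardinality of
the set `S` to be coloured, while avoiding a prescribed finite set of colours at each point.
A countable `S` is coloured injectively. An uncountable `S` is enumerated in order type `#S`, and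
`Z ξ` is the closure of the centres and of the points of index `< ξ` under intersecting distinct
lines spanned by its points; each stage has cardinality `< #S`. A point `v` first reached at
stage `ξ` (so `v ∉ Z ξ`) lies on a line through some `cᵢ` and another point of `Z ξ` for at most
one `i`, since two such lines would meet in `v ∈ Z ξ`. Colouring every stage by induction, while
also avoiding that one colour, confines the points of colour `i` on a line through `cᵢ` to a
single stage.
-/

/-- `C` is a cloud around `a`: every affine line through `a` meets `C` in a finite set.
Affine lines through `a` are the sets `{a + t • v | t : ℝ}` for `v ≠ 0`. -/
def IsCloudAround {V : Type*} [AddCommGroup V] [Module ℝ V] (a : V) (C : Set V) : Prop :=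
  ∀ v : V, v ≠ 0 → ({p | ∃ t : ℝ, p = a + t • v} ∩ C).Finite

open Set Cardinal

universe u

section AffineLines

variable (k : Type*) {V : Type*} {P : Type u} [DivisionRing k] [AddCommGroup V] [Module k V]
  [AddTorsor V P]

def IsLineMeet (p q r s z : P) : Prop :=
  line[k, p, q] ≠ line[k, r, s] ∧ z ∈ line[k, p, q] ∧ z ∈ line[k, r, s]

def IsMeetClosed (Z : Set P) : Prop :=
  ∀ ⦃p q r s z : P⦄, p ∈ Z → q ∈ Z → r ∈ Z → s ∈ Z → IsLineMeet k p q r s z → z ∈ Z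

def meetStep (G : Set P) : Set P :=
  G ∪ {z | ∃ p ∈ G, ∃ q ∈ G, ∃ r ∈ G, ∃ s ∈ G, IsLineMeet k p q r s z}

def meetClosure (G : Set P) : Set P :=
  ⋃ n, (meetStep k)^[n] G

variable {k}

theorem subsingleton_inter_of_affineSpan_pair_ne {p q r s : P}
    (h : line[k, p, q] ≠ line[k, r, s]) :
    ((line[k, p, q] : Set P) ∩ line[k, r, s]).Subsingleton := by
  rintro z ⟨hzpq, hzrs⟩ z' ⟨hz'pq, hz'rs⟩
  by_contra hzz'
  exact h ((affineSpan_pair_eq_of_mem_of_mem_of_ne hzpq hz'pq hzz').symm.trans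
    (affineSpan_pair_eq_of_mem_of_mem_of_ne hzrs hz'rs hzz'))

theorem subsingleton_setOf_isLineMeet (p q r s : P) :
    {z | IsLineMeet k p q r s z}.Subsingleton := fun _ hz _ hz' =>
  subsingleton_inter_of_affineSpan_pair_ne hz.1 hz.2 hz'.2

theorem AffineSubspace.isMeetClosed (E : AffineSubspace k P) : IsMeetClosed k (E : Set P) :=
  fun _ _ _ _ _ hp hq _ _ hz => affineSpan_pair_le_of_mem_of_mem hp hq hz.2.1

theorem monotone_iterate_meetStep (G : Set P) : Monotone fun n => (meetStep k)^[n] G :=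
  monotone_nat_of_le_succ fun n => by
    rw [Function.iterate_succ_apply']
    exact subset_union_left

theorem subset_meetClosure (G : Set P) : G ⊆ meetClosure k G :=
  subset_iUnion (fun n => (meetStep k)^[n] G) 0

theorem isMeetClosed_meetClosure (G : Set P) : IsMeetClosed k (meetClosure k G) := by
  intro p q r s z hp hq hr hs hz
  simp only [meetClosure, mem_iUnion] at hp hq hr hs ⊢
  obtain ⟨np, hp⟩ := hp
  obtain ⟨nq, hq⟩ := hq
  obtain ⟨nr, hr⟩ := hr
  obtain ⟨ns, hs⟩ := hs
  have hmono := monotone_iterate_meetStep (k := k) G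
  refine ⟨np + nq + nr + ns + 1, ?_⟩
  rw [Function.iterate_succ_apply']
  exact Or.inr ⟨p, hmono (by omega) hp, q, hmono (by omega) hq, r, hmono (by omega) hr,
    s, hmono (by omega) hs, hz⟩

theorem meetClosure_subset {G Z : Set P} (hGZ : G ⊆ Z) (hZ : IsMeetClosed k Z) :
    meetClosure k G ⊆ Z := by
  refine iUnion_subset fun n => ?_
  induction n with
  | zero => exact hGZ
  | succ n ih =>
    rw [Function.iterate_succ_apply']
    rintro z (hz | ⟨p, hp, q, hq, r, hr, s, hs, hmeet⟩)
    exacts [ih hz, hZ (ih hp) (ih hq) (ih hr) (ih hs) hmeet]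

theorem meetClosure_mono : Monotone (meetClosure k : Set P → Set P) := fun _ H hGH =>
  meetClosure_subset (hGH.trans (subset_meetClosure H)) (isMeetClosed_meetClosure H)

theorem exists_finite_of_mem_meetClosure {G : Set P} {z : P} (hz : z ∈ meetClosure k G) :
    ∃ F ⊆ G, F.Finite ∧ z ∈ meetClosure k F := by
  refine meetClosure_subset (Z := {z | ∃ F ⊆ G, F.Finite ∧ z ∈ meetClosure k F})
    (fun z hz => ⟨{z}, singleton_subset_iff.2 hz, finite_singleton z,
      subset_meetClosure _ rfl⟩) ?_ hz
  rintro p q r s z ⟨Fp, hFp, hFp', hp⟩ ⟨Fq, hFq, hFq', hq⟩ ⟨Fr, hFr, hFr', hr⟩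
    ⟨Fs, hFs, hFs', hs⟩ hmeet
  refine ⟨Fp ∪ Fq ∪ Fr ∪ Fs, by tauto_set, ((hFp'.union hFq').union hFr').union hFs',
    isMeetClosed_meetClosure _ ?_ ?_ ?_ ?_ hmeet⟩
  exacts [meetClosure_mono (by tauto_set) hp, meetClosure_mono (by tauto_set) hq,
    meetClosure_mono (by tauto_set) hr, meetClosure_mono (by tauto_set) hs]

theorem mk_meetStep_le {G : Set P} {μ : Cardinal} (hμ : ℵ₀ ≤ μ) (hG : #G ≤ μ) :
    #(meetStep k G) ≤ μ := by
  have hnew : {z | ∃ p ∈ G, ∃ q ∈ G, ∃ r ∈ G, ∃ s ∈ G, IsLineMeet k p q r s z} =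
      ⋃ w : G × G × G × G, {z | IsLineMeet k (w.1 : P) w.2.1 w.2.2.1 w.2.2.2 z} := by
    ext z; simp
  calc #(meetStep k G) ≤ #G + #(⋃ w : G × G × G × G,
          {z | IsLineMeet k (w.1 : P) w.2.1 w.2.2.1 w.2.2.2 z}) := hnew ▸ mk_union_le _ _
    _ ≤ μ + μ * (μ * (μ * μ)) * 1 := by
        gcongr
        refine (mk_iUnion_le _).trans (mul_le_mul' (by simp only [mk_prod, lift_id]; gcongr) ?_)
        exact ciSup_le' fun _ =>
          mk_le_one_iff_set_subsingleton.2 (subsingleton_setOf_isLineMeet _ _ _ _)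
    _ = μ := by simp [mul_eq_self hμ, add_eq_self hμ]

theorem mk_meetClosure_le (G : Set P) : #(meetClosure k G) ≤ max #G ℵ₀ := by
  have hstage : ∀ n, #((meetStep k)^[n] G) ≤ max #G ℵ₀ := by
    intro n
    induction n with
    | zero => exact le_max_left _ _
    | succ n ih =>
      rw [Function.iterate_succ_apply']
      exact mk_meetStep_le (le_max_right _ _) ih
  rw [← lift_le.{0}]
  calc lift.{0} #(meetClosure k G) ≤ sum fun n => #((meetStep k)^[n] G) :=
        mk_iUnion_le_sum_mk_lift
    _ ≤ sum fun _ : ℕ => max #G ℵ₀ := sum_le_sum _ _ hstage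
    _ = lift.{0} (max #G ℵ₀) := by simp

theorem meetClosure_union_image_Iio_subset {ι : Type*} [LinearOrder ι] (G : Set P) (x : ι → P)
    (ξ : ι) : meetClosure k (G ∪ x '' Iio ξ) ⊆
      meetClosure k G ∪ ⋃ η < ξ, meetClosure k (G ∪ x '' Iic η) := by
  intro z hz
  obtain ⟨F, hFG, hF, hzF⟩ := exists_finite_of_mem_meetClosure hz
  obtain ⟨T, hTξ, hT, hTF⟩ := (hF.sdiff (t := G)).exists_subset_finite_image_eq
    fun w hw => (hFG hw.1).resolve_left hw.2
  rcases T.eq_empty_or_nonempty with rfl | hTne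
  · refine Or.inl (meetClosure_mono (fun w hw => ?_) hzF)
    by_contra hwG
    simpa using hTF.symm.subset ⟨hw, hwG⟩
  · obtain ⟨η, hηT, hηmax⟩ := exists_max_image T id hT hTne
    refine Or.inr (mem_biUnion (hTξ hηT) (meetClosure_mono (fun w hw => ?_) hzF))
    by_cases hwG : w ∈ G
    · exact Or.inl hwG
    · obtain ⟨θ, hθ, rfl⟩ := hTF.symm.subset ⟨hw, hwG⟩
      exact Or.inr ⟨θ, hηmax θ hθ, rfl⟩

theorem exists_meetClosed_filtration {G S : Set P} (hG : #G ≤ ℵ₀) (hS : ℵ₀ < #S)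
    (hGS : Disjoint S (meetClosure k G)) :
    ∃ (ι : Type u) (_ : LinearOrder ι) (ρ : P → ι) (Z : ι → Set P),
      (∀ ξ, #{v ∈ S | ρ v = ξ} < #S) ∧ (∀ ξ, G ⊆ Z ξ ∧ IsMeetClosed k (Z ξ)) ∧
      (∀ v ∈ S, v ∉ Z (ρ v)) ∧ ∀ v ∈ S, ∀ w ∈ S, ρ w < ρ v → w ∈ Z (ρ v) := by
  let ι := (#S).ord.ToType
  obtain ⟨e⟩ : Nonempty (S ≃ ι) := Cardinal.eq.1 (mk_ord_toType _).symm
  let x : ι → P := fun ξ => e.symm ξ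
  let Y : ι → Set P := fun ξ => meetClosure k (G ∪ x '' Iic ξ)
  let Z : ι → Set P := fun ξ => meetClosure k (G ∪ x '' Iio ξ)
  have hYZ {η ξ : ι} (h : η < ξ) : Y η ⊆ Z ξ :=
    meetClosure_mono (union_subset_union_right _ (image_mono (Iic_subset_Iio.2 h)))
  have hrank : ∀ v ∈ S, ∃ ξ, v ∈ Y ξ ∧ v ∉ Z ξ := by
    intro v hv
    obtain ⟨ξ, hvξ, hmin⟩ := WellFounded.has_min wellFounded_lt {ξ | v ∈ Y ξ}
      ⟨e ⟨v, hv⟩, subset_meetClosure _ (Or.inr ⟨e ⟨v, hv⟩, mem_Iic.2 le_rfl, by simp [x]⟩)⟩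
    refine ⟨ξ, hvξ, fun hvZ => ?_⟩
    rcases meetClosure_union_image_Iio_subset G x ξ hvZ with hvG | hvY
    · exact hGS.notMem_of_mem_left hv hvG
    · obtain ⟨η, hηξ, hvη⟩ := mem_iUnion₂.1 hvY
      exact hmin η hvη hηξ
  have : Nonempty ι := (mk_ne_zero_iff.1 (aleph0_pos.trans hS).ne').map e
  choose! ρ hρY hρZ using hrank
  have hSι : #ι = #S := mk_ord_toType _
  refine ⟨ι, inferInstance, ρ, Z, fun ξ => ?_, fun ξ => ⟨fun w hw => subset_meetClosure _
    (Or.inl hw), isMeetClosed_meetClosure _⟩, hρZ, fun v hv w hw h => hYZ h (hρY w hw)⟩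
  calc #{v ∈ S | ρ v = ξ} ≤ #(Y ξ) := mk_le_mk_of_subset fun v ⟨hv, hvξ⟩ => hvξ ▸ hρY v hv
    _ ≤ max #(G ∪ x '' Iic ξ : Set P) ℵ₀ := mk_meetClosure_le _
    _ < #S := by
      refine max_lt ((mk_union_le _ _).trans_lt (add_lt_of_lt hS.le (hG.trans_lt hS) ?_)) hS
      refine mk_image_le.trans_lt ((mk_Iic_lt ξ ?_ (hSι ▸ hS.le)).trans_eq hSι)
      rw [mk_ord_toType, Ordinal.type_toType]

theorem affineSpan_pair_ne_of_notMem {E : AffineSubspace k P} {p q x : P} (hp : p ∈ E)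
    (hq : q ∈ E) (hpq : p ≠ q) (hx : x ∉ E) : line[k, p, x] ≠ line[k, q, x] := by
  intro h
  have hqp : line[k, p, q] = line[k, p, x] :=
    affineSpan_pair_eq_of_right_mem_of_ne (h ▸ left_mem_affineSpan_pair k q x) hpq.symm
  exact hx (affineSpan_pair_le_of_mem_of_mem hp hq (hqp ▸ right_mem_affineSpan_pair k p x))

variable (k) in
def blockedIndices (c : ℕ → P) (Z : Set P) (v : P) : Set ℕ :=
  {i | ∃ z ∈ Z, z ≠ c i ∧ z ∈ line[k, c i, v]}

theorem subsingleton_blockedIndices {E : AffineSubspace k P} {c : ℕ → P}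
    (hc : Function.Injective c) (hcE : ∀ i, c i ∈ E) {Z : Set P} (hZ : IsMeetClosed k Z)
    (hcZ : ∀ i, c i ∈ Z) {v : P} (hvE : v ∉ E) (hvZ : v ∉ Z) :
    (blockedIndices k c Z v).Subsingleton := by
  rintro i ⟨y, hyZ, hyi, hy⟩ j ⟨z, hzZ, hzj, hz⟩
  by_contra hij
  have hline_i : line[k, c i, y] = line[k, c i, v] :=
    affineSpan_pair_eq_of_right_mem_of_ne hy hyi
  have hline_j : line[k, c j, z] = line[k, c j, v] :=
    affineSpan_pair_eq_of_right_mem_of_ne hz hzj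
  refine hvZ (hZ (hcZ i) hyZ (hcZ j) hzZ ⟨?_, ?_, ?_⟩)
  · rw [hline_i, hline_j]
    exact affineSpan_pair_ne_of_notMem (hcE i) (hcE j) (hc.ne hij) hvE
  · exact hline_i ▸ right_mem_affineSpan_pair k _ _
  · exact hline_j ▸ right_mem_affineSpan_pair k _ _

variable (k) in
def IsCloudColoring (c : ℕ → P) (S : Set P) (f : P → ℕ) : Prop :=
  ∀ i q, ((line[k, c i, q] : Set P) ∩ {v ∈ S | f v = i}).Finite

theorem IsCloudColoring.of_injOn {c : ℕ → P} {S : Set P} {f : P → ℕ} (hf : InjOn f S) :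
    IsCloudColoring k c S f := fun _ _ =>
  (Subsingleton.anti (fun _ hv _ hw => hf hv.1 hw.1 (hv.2.trans hw.2.symm))
    inter_subset_right).finite

theorem IsCloudColoring.glue {ι : Type*} [LinearOrder ι] {c : ℕ → P} {S : Set P} {ρ : P → ι}
    {Z : ι → Set P} {F : ι → P → ℕ} (hcS : ∀ i, c i ∉ S)
    (hρZ : ∀ v ∈ S, ∀ w ∈ S, ρ w < ρ v → w ∈ Z (ρ v))
    (hF : ∀ ξ, IsCloudColoring k c {v ∈ S | ρ v = ξ} (F ξ))
    (hFZ : ∀ v ∈ S, F (ρ v) v ∉ blockedIndices k c (Z (ρ v)) v) :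
    IsCloudColoring k c S fun v => F (ρ v) v := by
  intro i q
  set A := (line[k, c i, q] : Set P) ∩ {v ∈ S | F (ρ v) v = i}
  have hrank : ∀ v ∈ A, ∀ w ∈ A, ¬ρ w < ρ v := by
    rintro v ⟨hvq, hvS, hvi⟩ w ⟨hwq, hwS, -⟩ hwv
    have hline : line[k, c i, v] = line[k, c i, q] :=
      affineSpan_pair_eq_of_right_mem_of_ne hvq fun h => hcS i (h ▸ hvS)
    refine hFZ v hvS (hvi ▸ ⟨w, hρZ v hvS w hwS hwv, fun h => hcS i (h ▸ hwS), hline ▸ hwq⟩)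
  rcases A.eq_empty_or_nonempty with hA | ⟨v, hv⟩
  · exact hA ▸ finite_empty
  · have hρv : ∀ w ∈ A, ρ w = ρ v := fun w hw =>
      le_antisymm (not_lt.1 (hrank w hw v hv)) (not_lt.1 (hrank v hv w hw))
    exact (hF (ρ v) i q).subset fun w hw =>
      ⟨hw.1, ⟨hw.2.1, hρv w hw⟩, hρv w hw ▸ hw.2.2⟩

theorem exists_injOn_forall_notMem {α : Type*} {S : Set α} (hS : S.Countable) {B : α → Set ℕ}
    (hB : ∀ v ∈ S, (B v).Finite) : ∃ f : α → ℕ, (∀ v ∈ S, f v ∉ B v) ∧ InjOn f S := by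
  obtain ⟨e, he⟩ := countable_iff_exists_injOn.1 hS
  have hfree : ∀ v ∈ S, ∃ m, Nat.pair (e v) m ∉ B v := fun v hv => by
    obtain ⟨_, ⟨m, rfl⟩, hm⟩ := (infinite_range_of_injective fun m m' h =>
      (Nat.pair_eq_pair.1 h).2).exists_notMem_finite (hB v hv)
    exact ⟨m, hm⟩
  choose! m hm using hfree
  exact ⟨fun v => Nat.pair (e v) (m v), hm,
    fun v hv w hw h => he hv hw (Nat.pair_eq_pair.1 h).1⟩

theorem exists_isCloudColoring {E : AffineSubspace k P} {c : ℕ → P} (hc : Function.Injective c)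
    (hcE : ∀ i, c i ∈ E) (S : Set P) (hSE : Disjoint S E) (B : P → Set ℕ)
    (hB : ∀ v ∈ S, (B v).Finite) :
    ∃ f : P → ℕ, (∀ v ∈ S, f v ∉ B v) ∧ IsCloudColoring k c S f := by
  induction hκ : #S using WellFoundedLT.induction generalizing S B with
  | ind κ IH =>
    rcases le_or_gt #S ℵ₀ with hcount | hunc
    · obtain ⟨f, hfB, hf⟩ :=
        exists_injOn_forall_notMem (le_aleph0_iff_set_countable.1 hcount) hB
      exact ⟨f, hfB, .of_injOn hf⟩
    have hcl : meetClosure k (range c) ⊆ E :=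
      meetClosure_subset (range_subset_iff.2 hcE) E.isMeetClosed
    obtain ⟨ι, _, ρ, Z, hslab, hZ, hρZ, hρ⟩ := exists_meetClosed_filtration
      (countable_range c).le_aleph0 hunc (hSE.mono_right hcl)
    have hslabs : ∀ ξ, ∃ F : P → ℕ,
        (∀ v ∈ {v ∈ S | ρ v = ξ}, F v ∉ B v ∪ blockedIndices k c (Z ξ) v) ∧
        IsCloudColoring k c {v ∈ S | ρ v = ξ} F := fun ξ =>
      IH _ (hκ ▸ hslab ξ) _ (hSE.mono_left (sep_subset _ _)) _
        (fun v ⟨hvS, hvξ⟩ => (hB v hvS).union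
          (subsingleton_blockedIndices hc hcE (hZ ξ).2 (fun i => (hZ ξ).1 (mem_range_self i))
            (hSE.notMem_of_mem_left hvS) (hvξ ▸ hρZ v hvS)).finite) rfl
    choose F hFB hF using hslabs
    refine ⟨fun v => F (ρ v) v, fun v hv h => hFB _ v ⟨hv, rfl⟩ (Or.inl h), .glue
      (fun i hi => hSE.notMem_of_mem_left hi (hcE i)) hρ hF
      fun v hv h => hFB _ v ⟨hv, rfl⟩ (Or.inr h)⟩

end AffineLines

theorem coe_affineSpan_pair_add {k V : Type*} [Ring k] [AddCommGroup V] [Module k V]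
    (a v : V) : (line[k, a, a + v] : Set V) = {p | ∃ t : k, p = a + t • v} := by
  ext p
  rw [SetLike.mem_coe, ← vsub_vadd p a, vadd_left_mem_affineSpan_pair]
  simp [eq_sub_iff_add_eq, add_comm, eq_comm]

theorem isCloudAround_iff {V : Type*} [AddCommGroup V] [Module ℝ V] {a : V} {C : Set V} :
    IsCloudAround a C ↔ ∀ q, ((line[ℝ, a, q] : Set V) ∩ C).Finite := by
  refine ⟨fun h q => ?_, fun h v _ => coe_affineSpan_pair_add (k := ℝ) a v ▸ h _⟩
  rcases eq_or_ne q a with rfl | hq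
  · simp [(finite_singleton q).subset inter_subset_left]
  · simpa [← coe_affineSpan_pair_add] using h (q - a) (sub_ne_zero.2 hq)

theorem isCloudAround_of_notMem {V : Type*} [AddCommGroup V] [Module ℝ V] {p q b : V}
    (hb : b ∉ line[ℝ, p, q]) : IsCloudAround b (line[ℝ, p, q] : Set V) :=
  isCloudAround_iff.2 fun r => (subsingleton_inter_of_affineSpan_pair_ne fun h =>
    hb (h ▸ left_mem_affineSpan_pair ℝ b r)).finite

theorem exists_cloud_cover {V : Type*} [AddCommGroup V] [Module ℝ V] {p q b : V} (hpq : p ≠ q)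
    (hb : b ∉ line[ℝ, p, q]) :
    ∃ (a : ℕ → V) (C : ℕ → Set V), (∀ i, IsCloudAround (a i) (C i)) ∧ ⋃ i, C i = Set.univ := by
  let E := line[ℝ, p, q]
  let c : ℕ → V := fun i => AffineMap.lineMap p q (i : ℝ)
  obtain ⟨f, -, hf⟩ := exists_isCloudColoring (E := E) (c := c)
    ((AffineMap.lineMap_injective ℝ hpq).comp Nat.cast_injective)
    (fun i => AffineMap.lineMap_mem_affineSpan_pair _ _ _) (E : Set V)ᶜ disjoint_compl_left
    (fun _ => ∅) fun _ _ => finite_empty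
  refine ⟨fun | 0 => b | i + 1 => c i, fun | 0 => E | i + 1 => {v ∈ (E : Set V)ᶜ | f v = i},
    ?_, ?_⟩
  · rintro (_ | i)
    exacts [isCloudAround_of_notMem hb, isCloudAround_iff.2 (hf i)]
  · refine eq_univ_of_forall fun v => mem_iUnion.2 ?_
    by_cases hv : v ∈ E
    exacts [⟨0, hv⟩, ⟨f v + 1, hv, rfl⟩]

theorem countably_many_clouds_cover (N : ℕ) (hN : 2 ≤ N) :
    ∃ (a : ℕ → (Fin N → ℝ)) (C : ℕ → Set (Fin N → ℝ)),
      (∀ i, IsCloudAround (a i) (C i)) ∧ (⋃ i, C i) = Set.univ := by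
  let e₀ : Fin N → ℝ := Pi.single ⟨0, by omega⟩ 1
  let e₁ : Fin N → ℝ := Pi.single ⟨1, by omega⟩ 1
  refine exists_cloud_cover (p := 0) (q := e₀) (b := e₁) (by simp [e₀, eq_comm]) fun h => ?_
  obtain ⟨t, ht⟩ := mem_affineSpan_pair_iff_exists_lineMap_eq.1 h
  simpa [e₀, e₁, AffineMap.lineMap_apply_module', Pi.single_apply, Fin.ext_iff]
    using congrFun ht ⟨1, by omega⟩
end

section
/- Let n ≥ 3 and N ≥ 2. Suppose that for any n distinct noncollinear points a_1, ..., a_n in ℝ², there exist clouds C_1, ..., C_n with C_i a cloud around a_i whose union is ℝ². Then for any n distinct noncollinear points b_1, ..., b_n in ℝ^N, there exist clouds D_1, ..., D_n with D_i a cloud around b_i whose union is ℝ^N. -/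
/-!
Project linearly onto the plane by a map `π` that is injective on the points `b i` and keeps
them noncollinear; a generic pair of functionals does this. Clouds `C i` around the `π (b i)`
may be changed on the finite set of centres so that no `C i` contains its own centre. Their
preimages under `π` are then clouds around the `b i`: a line through `b i` is either mapped
injectively onto a line through `π (b i)`, or collapsed onto `π (b i)`, which `C i` avoids.
-/

open Set Function

section Collinear

variable {K V P ι : Type*} [Field K] [AddCommGroup V] [Module K V] [AddTorsor V P]

theorem exists_linearIndependent_vsub_of_not_collinear {b : ι → P}
    (h : ¬Collinear K (range b)) :
    ∃ i j k, LinearIndependent K ![b j -ᵥ b i, b k -ᵥ b i] := by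
  by_contra! hdep
  apply h
  rcases isEmpty_or_nonempty ι with hι | ⟨⟨i⟩⟩
  · simp [range_eq_empty, collinear_empty]
  by_cases hconst : ∀ k, b k = b i
  · exact (collinear_singleton K (b i)).subset (range_subset_iff.2 hconst)
  push Not at hconst
  obtain ⟨k, hk⟩ := hconst
  rw [collinear_iff_of_mem (mem_range_self i)]
  refine ⟨b k -ᵥ b i, ?_⟩
  rintro _ ⟨j, rfl⟩
  obtain ⟨r, hr⟩ : ∃ r : K, r • (b k -ᵥ b i) = b j -ᵥ b i := by
    simpa [linearIndependent_fin2, hk] using hdep i j k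
  exact ⟨r, by rw [hr, vsub_vadd]⟩

theorem not_collinear_of_linearIndependent_vsub {s : Set P} {p q r : P} (hp : p ∈ s)
    (hq : q ∈ s) (hr : r ∈ s) (h : LinearIndependent K ![q -ᵥ p, r -ᵥ p]) :
    ¬Collinear K s := by
  rw [collinear_iff_of_mem hp]
  rintro ⟨v, hv⟩
  obtain ⟨a, rfl⟩ := hv q hq
  obtain ⟨c, rfl⟩ := hv r hr
  rw [vadd_vsub, vadd_vsub] at h
  obtain ⟨hc, -⟩ := LinearIndependent.pair_iff.1 h c (-a) (by module)
  simpa [hc] using h.ne_zero 1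

end Collinear

section Projection

variable {K V ι : Type*} [Field K] [Infinite K] [AddCommGroup V] [Module K V]

theorem Module.exists_dual_injective_comp [Finite ι] {b : ι → V} (hb : Function.Injective b) :
    ∃ f : Module.Dual K V, Function.Injective (f ∘ b) := by
  obtain ⟨f, hf⟩ := Module.exists_dual_forall_apply_ne_zero (K := K)
    (fun st : {st : ι × ι // st.1 ≠ st.2} => b st.1.1 - b st.1.2)
    (fun st => sub_ne_zero.2 (hb.ne st.2))
  refine ⟨f, fun s t hst => ?_⟩
  by_contra hne
  exact hf ⟨(s, t), hne⟩ (by simpa [sub_eq_zero] using hst)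

theorem exists_linearMap_fin_two_injective_not_collinear [Finite ι] {b : ι → V}
    (hb : Injective b) (hbc : ¬Collinear K (range b)) :
    ∃ π : V →ₗ[K] (Fin 2 → K), Injective (π ∘ b) ∧ ¬Collinear K (range (π ∘ b)) := by
  obtain ⟨i, j, k, hLI⟩ := exists_linearIndependent_vsub_of_not_collinear hbc
  simp only [vsub_eq_sub] at hLI
  set x := b j - b i
  set y := b k - b i
  obtain ⟨f, hf⟩ := Module.exists_dual_injective_comp (K := K) hb
  have hfx : f x ≠ 0 := by
    rw [map_sub, sub_ne_zero]
    exact hf.ne fun hji => hLI.ne_zero 0 (by simp [x, hji])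
  -- `g` only has to separate `ker f` within the plane of `x` and `y`, spanned by this vector
  have hz : f x • y - f y • x ≠ 0 := fun hz =>
    hfx (LinearIndependent.pair_iff.1 hLI (-f y) (f x) (by rw [← hz]; module)).2
  obtain ⟨g, hg⟩ := Module.Projective.exists_dual_ne_zero K hz
  set π := LinearMap.pi ![f, g]
  have hπ : ∀ v, π v = ![f v, g v] := fun v => by ext c; fin_cases c <;> rfl
  refine ⟨π, fun s t hst => hf (congr_fun hst 0),
    not_collinear_of_linearIndependent_vsub (mem_range_self i) (mem_range_self j)
      (mem_range_self k) ?_⟩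
  have hdet : (!![f x, g x; f y, g y]).det ≠ 0 := by
    rw [Matrix.det_fin_two_of]
    simpa [mul_comm] using hg
  simp only [comp_apply, vsub_eq_sub, ← map_sub]
  rw [hπ, hπ]
  exact Matrix.linearIndependent_rows_of_det_ne_zero hdet

end Projection

section Cloud

variable {V W ι : Type*} [AddCommGroup V] [Module ℝ V] [AddCommGroup W] [Module ℝ W]

theorem isCloudAround_iff_s3 {a : V} {C : Set V} :
    IsCloudAround a C ↔ ∀ v ≠ 0, {t : ℝ | a + t • v ∈ C}.Finite := by
  refine forall₂_congr fun v hv => ?_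
  have hline : {p | ∃ t : ℝ, p = a + t • v} ∩ C =
      (fun t : ℝ => a + t • v) '' {t | a + t • v ∈ C} := by
    ext p
    constructor
    · rintro ⟨⟨t, rfl⟩, hp⟩
      exact ⟨t, hp, rfl⟩
    · rintro ⟨t, ht, rfl⟩
      exact ⟨⟨t, rfl⟩, ht⟩
  rw [hline, finite_image_iff]
  exact fun s _ t _ hst => smul_left_injective ℝ hv (add_left_cancel hst)

theorem IsCloudAround.mono {a : V} {C D : Set V} (hC : IsCloudAround a C) (hD : D ⊆ C) :
    IsCloudAround a D :=
  fun v hv => (hC v hv).subset (inter_subset_inter_right _ hD)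

theorem IsCloudAround.union_finite {a : V} {C F : Set V} (hC : IsCloudAround a C)
    (hF : F.Finite) : IsCloudAround a (C ∪ F) :=
  fun v hv => by
    rw [inter_union_distrib_left]
    exact (hC v hv).union (hF.subset inter_subset_right)

theorem IsCloudAround.preimage (π : V →ₗ[ℝ] W) {b : V} {C : Set W}
    (hC : IsCloudAround (π b) C) (hb : π b ∉ C) : IsCloudAround b (π ⁻¹' C) := by
  rw [isCloudAround_iff_s3] at hC ⊢
  intro v hv
  by_cases hπv : π v = 0
  · simp [hπv, hb]
  · simpa using hC (π v) hπv

theorem exists_isCloudAround_cover_notMem_center [Finite ι] [Nontrivial ι] {a : ι → W}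
    (ha : Injective a) {C : ι → Set W} (hC : ∀ i, IsCloudAround (a i) (C i))
    (hcover : ⋃ i, C i = univ) :
    ∃ E : ι → Set W, (∀ i, IsCloudAround (a i) (E i) ∧ a i ∉ E i) ∧ ⋃ i, E i = univ := by
  refine ⟨fun i => (C i ∪ range a) \ {a i},
    fun i => ⟨((hC i).union_finite (finite_range a)).mono sdiff_subset, by simp⟩, ?_⟩
  refine eq_univ_of_forall fun w => mem_iUnion.2 ?_
  by_cases hw : w ∈ range a
  · obtain ⟨m, rfl⟩ := hw
    obtain ⟨i, hi⟩ := exists_ne m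
    exact ⟨i, Or.inr (mem_range_self m), ha.ne hi.symm⟩
  · obtain ⟨i, hi⟩ := mem_iUnion.1 (hcover ▸ mem_univ w : w ∈ ⋃ i, C i)
    exact ⟨i, Or.inl hi, fun hwi => hw ⟨i, hwi.symm⟩⟩

theorem exists_isCloudAround_cover_of_linearMap [Finite ι] [Nontrivial ι] (π : V →ₗ[ℝ] W)
    {b : ι → V} (hb : Injective (π ∘ b)) {C : ι → Set W}
    (hC : ∀ i, IsCloudAround (π (b i)) (C i)) (hcover : ⋃ i, C i = univ) :
    ∃ D : ι → Set V, (∀ i, IsCloudAround (b i) (D i)) ∧ ⋃ i, D i = univ := by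
  obtain ⟨E, hE, hEcover⟩ := exists_isCloudAround_cover_notMem_center hb hC hcover
  exact ⟨fun i => π ⁻¹' E i, fun i => (hE i).1.preimage π (hE i).2,
    by rw [← preimage_iUnion, hEcover, preimage_univ]⟩

end Cloud

theorem clouds_at_points_two_to_N_general (n N : ℕ) (hn : 3 ≤ n)
    (h2 : ∀ a : Fin n → (Fin 2 → ℝ), Function.Injective a → ¬ Collinear ℝ (Set.range a) →
      ∃ C : Fin n → Set (Fin 2 → ℝ),
        (∀ i, IsCloudAround (a i) (C i)) ∧ (⋃ i, C i) = Set.univ) :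
    ∀ b : Fin n → (Fin N → ℝ), Function.Injective b → ¬ Collinear ℝ (Set.range b) →
      ∃ D : Fin n → Set (Fin N → ℝ),
        (∀ i, IsCloudAround (b i) (D i)) ∧ (⋃ i, D i) = Set.univ := by
  intro b hb hbc
  have : Nontrivial (Fin n) := Fin.nontrivial_iff_two_le.2 (by omega)
  obtain ⟨π, hπb, hπbc⟩ := exists_linearMap_fin_two_injective_not_collinear hb hbc
  obtain ⟨C, hC, hcover⟩ := h2 (π ∘ b) hπb hπbc
  exact exists_isCloudAround_cover_of_linearMap π hπb hC hcover

theorem clouds_at_points_two_to_N (n N : ℕ) (hn : 3 ≤ n) (hN : 2 ≤ N)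
    (h2 : ∀ a : Fin n → (Fin 2 → ℝ), Function.Injective a → ¬ Collinear ℝ (Set.range a) →
      ∃ C : Fin n → Set (Fin 2 → ℝ),
        (∀ i, IsCloudAround (a i) (C i)) ∧ (⋃ i, C i) = Set.univ) :
    ∀ b : Fin n → (Fin N → ℝ), Function.Injective b → ¬ Collinear ℝ (Set.range b) →
      ∃ D : Fin n → Set (Fin N → ℝ),
        (∀ i, IsCloudAround (b i) (D i)) ∧ (⋃ i, D i) = Set.univ :=
  clouds_at_points_two_to_N_general n N hn h2
end

section
/- Let 2 ≤ K < N. Let C ⊆ ℝ^K be a cloud around a point a ∈ ℝ^K with a ∉ C. Then, identifying ℝ^N with ℝ^K × ℝ^{N−K}, for any b ∈ ℝ^{N−K} the set C' = {(x, y) ∈ ℝ^K × ℝ^{N−K} : x ∈ C} is a cloud around the point a' = (a, b). -/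
theorem cloud_extension (K N : ℕ) (hK : 2 ≤ K) (hKN : K < N)
    (a : Fin K → ℝ) (C : Set (Fin K → ℝ)) (hC : IsCloudAround a C) (ha : a ∉ C)
    (b : Fin (N - K) → ℝ) :
    IsCloudAround (V := (Fin K → ℝ) × (Fin (N - K) → ℝ)) (a, b)
      {p : (Fin K → ℝ) × (Fin (N - K) → ℝ) | p.1 ∈ C} := by
  intro v hv
  have key : ({p : (Fin K → ℝ) × (Fin (N - K) → ℝ) | ∃ t : ℝ, p = (a, b) + t • v} ∩
      {p : (Fin K → ℝ) × (Fin (N - K) → ℝ) | p.1 ∈ C}) ⊆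
      (fun t : ℝ => (a, b) + t • v) '' {t : ℝ | a + t • v.1 ∈ C} := by
    rintro p ⟨⟨t, rfl⟩, hp⟩
    exact ⟨t, hp, rfl⟩
  refine Set.Finite.subset (Set.Finite.image _ ?_) key
  by_cases hv1 : v.1 = 0
  · have : {t : ℝ | a + t • v.1 ∈ C} = ∅ := by
      ext t; simp [hv1, ha]
    simp [this]
  · have hfin := hC v.1 hv1
    have hinj : Set.InjOn (fun t : ℝ => a + t • v.1) {t : ℝ | a + t • v.1 ∈ C} := by
      intro s _ t _ h
      have : (s - t) • v.1 = 0 := by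
        have := sub_eq_zero.mpr h
        simpa [sub_smul, add_sub_add_left_eq_sub, sub_eq_zero] using h
      rcases smul_eq_zero.mp this with h | h
      · linarith [sub_eq_zero.mp h]
      · exact absurd h hv1
    have hsub : (fun t : ℝ => a + t • v.1) '' {t : ℝ | a + t • v.1 ∈ C} ⊆
        ({p | ∃ t : ℝ, p = a + t • v.1} ∩ C) := by
      rintro x ⟨t, ht, rfl⟩
      exact ⟨⟨t, rfl⟩, ht⟩
    exact Set.Finite.of_finite_image (hfin.subset hsub) hinj
end

section
/- Let n ≥ 3 and N ≥ 2, and let a_1, ..., a_n ∈ ℝ^N be distinct noncollinear points. Then there exists a bijection T : ℝ^N → ℝ^N that maps collinear points to collinear points (a collineation) such that the projections of T(a_1), ..., T(a_n) onto the first two coordinates are n distinct noncollinear points of ℝ². -/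
open Matrix

/-- A map sends collinear points to collinear points. -/
def MapsCollinear {N : ℕ} (f : (Fin N → ℝ) → (Fin N → ℝ)) : Prop :=
  ∀ p q r : Fin N → ℝ, Collinear ℝ {p, q, r} → Collinear ℝ ({f p, f q, f r} : Set (Fin N → ℝ))

/-- avoidance lemma: a functional not vanishing on finitely many nonzero vectors -/
lemma aux_avoid (N : ℕ) (ι : Type) [Finite ι] (d : ι → (Fin N → ℝ)) (hd : ∀ t, d t ≠ 0) :
    ∃ c : Fin N → ℝ, ∀ t, c ⬝ᵥ d t ≠ 0 := by
  classical
  let φ : ι → ((Fin N → ℝ) →ₗ[ℝ] ℝ) := fun t =>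
    { toFun := fun c => c ⬝ᵥ d t
      map_add' := fun x y => add_dotProduct x y (d t)
      map_smul' := fun m x => smul_dotProduct m x (d t) }
  by_contra h
  push_neg at h
  have hcov : ⋃ t, ((LinearMap.ker (φ t) : Subspace ℝ (Fin N → ℝ)) : Set (Fin N → ℝ))
      = Set.univ := by
    ext c
    simp only [Set.mem_iUnion, Set.mem_univ, iff_true, SetLike.mem_coe, LinearMap.mem_ker]
    obtain ⟨t, ht⟩ := h c
    exact ⟨t, ht⟩
  obtain ⟨t, ht⟩ := Subspace.exists_eq_top_of_iUnion_eq_univ hcov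
  have hmem : d t ⬝ᵥ d t = 0 := by
    have : d t ∈ LinearMap.ker (φ t) := by rw [ht]; trivial
    exact this
  exact hd t ((dotProduct_self_eq_zero).mp hmem)

theorem exists_collineation_with_good_projection (n N : ℕ) (hn : 3 ≤ n) (hN : 2 ≤ N)
    (a : Fin n → (Fin N → ℝ)) (ha : Function.Injective a)
    (hcol : ¬ Collinear ℝ (Set.range a)) :
    ∃ T : (Fin N → ℝ) → (Fin N → ℝ), Function.Bijective T ∧ MapsCollinear T ∧
      Function.Injective (fun i : Fin n => fun j : Fin 2 => T (a i) (Fin.castLE hN j)) ∧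
      ¬ Collinear ℝ (Set.range (fun i : Fin n => fun j : Fin 2 => T (a i) (Fin.castLE hN j))) := by
  classical
  set i0 : Fin N := Fin.castLE hN 0 with hi0def
  set i1 : Fin N := Fin.castLE hN 1 with hi1def
  have hi01 : i0 ≠ i1 := by simp [i0, i1, Fin.ext_iff]
  set z0 : Fin n := ⟨0, by omega⟩
  set z1 : Fin n := ⟨1, by omega⟩
  have hz01 : z1 ≠ z0 := by simp [z0, z1, Fin.ext_iff]
  set d1 : Fin N → ℝ := a z1 - a z0 with hd1def
  -- find a third direction not in the span of d1
  have hk : ∃ k : Fin n, a k - a z0 ∉ Submodule.span ℝ {d1} := by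
    by_contra h
    push_neg at h
    apply hcol
    rw [collinear_iff_of_mem (Set.mem_range_self z0)]
    refine ⟨d1, ?_⟩
    rintro p ⟨i, rfl⟩
    obtain ⟨r, hr⟩ := Submodule.mem_span_singleton.mp (h i)
    exact ⟨r, by rw [vadd_eq_add, hr]; abel⟩
  obtain ⟨k, hk⟩ := hk
  set d2 : Fin N → ℝ := a k - a z0 with hd2def
  -- choose c
  obtain ⟨c, hc⟩ := aux_avoid N ({p : Fin n × Fin n // p.1 ≠ p.2} ⊕ Unit)
    (fun t => Sum.elim (fun p => a p.1.1 - a p.1.2) (fun _ => (Pi.single i0 1 : Fin N → ℝ)) t)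
    (by
      rintro (⟨⟨i, i'⟩, hii⟩ | _)
      · exact sub_ne_zero.mpr (fun h => hii (ha h))
      · simp only [Sum.elim_inr]
        intro h
        have := congrFun h i0
        simp at this)
  have hc1 : ∀ i i' : Fin n, i ≠ i' → c ⬝ᵥ (a i - a i') ≠ 0 := fun i i' h =>
    hc (Sum.inl ⟨(i, i'), h⟩)
  have hc0 : c i0 ≠ 0 := by
    have := hc (Sum.inr ())
    simpa [dotProduct_single] using this
  have hcd1 : c ⬝ᵥ d1 ≠ 0 := hc1 z1 z0 hz01
  -- the special vectors for b
  set u : Fin N → ℝ := (c ⬝ᵥ d1) • d2 - (c ⬝ᵥ d2) • d1 with hudef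
  have hu : u ≠ 0 := by
    intro h
    apply hk
    rw [Submodule.mem_span_singleton]
    refine ⟨(c ⬝ᵥ d1)⁻¹ * (c ⬝ᵥ d2), ?_⟩
    have h' : (c ⬝ᵥ d1) • d2 = (c ⬝ᵥ d2) • d1 := sub_eq_zero.mp h
    rw [mul_smul, ← h', inv_smul_smul₀ hcd1]
  have hw : ((c i1 • (Pi.single i0 1 : Fin N → ℝ) - c i0 • (Pi.single i1 1 : Fin N → ℝ) : Fin N → ℝ)) ≠ 0 := by
    intro h
    have := congrFun h i1
    simp [Pi.single_apply, hi01, (Ne.symm hi01)] at this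
    exact hc0 this
  -- choose b
  obtain ⟨b, hb⟩ := aux_avoid N (Fin 2)
    (fun t => if t = 0 then u else c i1 • (Pi.single i0 1 : Fin N → ℝ) - c i0 • (Pi.single i1 1 : Fin N → ℝ))
    (by intro t; split
        · exact hu
        · exact hw)
  have hbu : b ⬝ᵥ u ≠ 0 := by simpa using hb 0
  have hbw : c i1 * b i0 - c i0 * b i1 ≠ 0 := by
    have := hb 1
    simp only [if_neg (by decide : (1 : Fin 2) ≠ 0)] at this
    rwa [dotProduct_sub, dotProduct_smul, dotProduct_smul, dotProduct_single,
      dotProduct_single, mul_one, mul_one, smul_eq_mul, smul_eq_mul] at this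
  -- define the linear map
  set Tl : (Fin N → ℝ) →ₗ[ℝ] (Fin N → ℝ) :=
    { toFun := fun x i => if i = i0 then c ⬝ᵥ x else if i = i1 then b ⬝ᵥ x else x i
      map_add' := by
        intro x y
        funext i
        by_cases h : i = i0 <;> by_cases h' : i = i1 <;>
          simp [h, h', dotProduct_add, Ne.symm hi01]
      map_smul' := by
        intro m x
        funext i
        by_cases h : i = i0 <;> by_cases h' : i = i1 <;>
          simp [h, h', dotProduct_smul, Ne.symm hi01] } with hTldef
  have hT0 : ∀ x, Tl x i0 = c ⬝ᵥ x := fun x => by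
    show (if i0 = i0 then c ⬝ᵥ x else if i0 = i1 then b ⬝ᵥ x else x i0) = c ⬝ᵥ x
    rw [if_pos rfl]
  have hT1 : ∀ x, Tl x i1 = b ⬝ᵥ x := fun x => by
    show (if i1 = i0 then c ⬝ᵥ x else if i1 = i1 then b ⬝ᵥ x else x i1) = b ⬝ᵥ x
    rw [if_neg (Ne.symm hi01), if_pos rfl]
  have hTother : ∀ x i, i ≠ i0 → i ≠ i1 → Tl x i = x i := fun x i h h' => by
    show (if i = i0 then c ⬝ᵥ x else if i = i1 then b ⬝ᵥ x else x i) = x i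
    rw [if_neg h, if_neg h']
  -- injectivity of Tl
  have hinj : Function.Injective Tl := by
    rw [← LinearMap.ker_eq_bot, LinearMap.ker_eq_bot']
    intro x hx
    have hother : ∀ i, i ≠ i0 → i ≠ i1 → x i = 0 := by
      intro i h h'
      have := congrFun hx i
      rwa [hTother x i h h'] at this
    have hsum : ∀ v : Fin N → ℝ, v ⬝ᵥ x = v i0 * x i0 + v i1 * x i1 := by
      intro v
      rw [dotProduct, ← Finset.sum_subset (Finset.subset_univ {i0, i1})
        (by intro j _ hj
            simp only [Finset.mem_insert, Finset.mem_singleton, not_or] at hj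
            rw [hother j hj.1 hj.2, mul_zero]),
        Finset.sum_pair hi01]
    have hcx : c i0 * x i0 + c i1 * x i1 = 0 := by
      rw [← hsum c]; rw [← hT0 x, hx]; rfl
    have hbx : b i0 * x i0 + b i1 * x i1 = 0 := by
      rw [← hsum b]; rw [← hT1 x, hx]; rfl
    have hx0 : x i0 = 0 := by
      have h0 : x i0 * (c i1 * b i0 - c i0 * b i1) = 0 := by linear_combination c i1 * hbx - b i1 * hcx
      rcases mul_eq_zero.mp h0 with h | h
      · exact h
      · exact absurd h hbw
    have hx1 : x i1 = 0 := by
      have h0 : x i1 * (c i1 * b i0 - c i0 * b i1) = 0 := by linear_combination b i0 * hcx - c i0 * hbx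
      rcases mul_eq_zero.mp h0 with h | h
      · exact h
      · exact absurd h hbw
    funext i
    by_cases h : i = i0
    · rw [h]; exact hx0
    · by_cases h' : i = i1
      · rw [h']; exact hx1
      · exact hother i h h'
  have hbij : Function.Bijective Tl :=
    ⟨hinj, (LinearMap.injective_iff_surjective).mp hinj⟩
  refine ⟨Tl, hbij, ?_, ?_, ?_⟩
  · -- MapsCollinear
    intro p q r hpqr
    rw [collinear_iff_of_mem (Set.mem_insert p _)] at hpqr
    obtain ⟨v, hv⟩ := hpqr
    rw [collinear_iff_of_mem (Set.mem_insert (Tl p) _)]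
    refine ⟨Tl v, ?_⟩
    intro y hy
    have key : ∀ s : Fin N → ℝ, s ∈ ({p, q, r} : Set (Fin N → ℝ)) →
        ∃ t : ℝ, Tl s = t • Tl v +ᵥ Tl p := by
      intro s hs
      obtain ⟨t, ht⟩ := hv s hs
      exact ⟨t, by rw [ht, vadd_eq_add, map_add, _root_.map_smul, vadd_eq_add]⟩
    rcases hy with rfl | rfl | rfl
    · exact key p (Set.mem_insert p _)
    · exact key q (by simp)
    · exact key r (by simp)
  · -- injectivity of the projection
    intro i i' h
    by_contra hne
    have h0 := congrFun h (0 : Fin 2)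
    simp only at h0
    have : c ⬝ᵥ a i = c ⬝ᵥ a i' := by
      rw [← hT0 (a i), ← hT0 (a i')]
      exact h0
    exact hc1 i i' hne (by rw [dotProduct_sub, this, sub_self])
  · -- noncollinearity of the projection
    intro hq
    set q : Fin n → (Fin 2 → ℝ) := fun i j => Tl (a i) (Fin.castLE hN j) with hqdef
    rw [collinear_iff_of_mem (Set.mem_range_self z0)] at hq
    obtain ⟨v, hv⟩ := hq
    obtain ⟨r1, h1⟩ := hv (q z1) (Set.mem_range_self z1)
    obtain ⟨rk, hk2⟩ := hv (q k) (Set.mem_range_self k)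
    have hq0 : ∀ i : Fin n, q i 0 = c ⬝ᵥ a i := fun i => hT0 (a i)
    have hq1 : ∀ i : Fin n, q i 1 = b ⬝ᵥ a i := fun i => hT1 (a i)
    have hA : c ⬝ᵥ d1 = r1 * v 0 + (c ⬝ᵥ a z0 - c ⬝ᵥ a z0) := by
      have := congrFun h1 0
      rw [vadd_eq_add] at this
      simp only [Pi.add_apply, Pi.smul_apply, smul_eq_mul] at this
      rw [hq0 z1, hq0 z0] at this
      rw [hd1def, dotProduct_sub]
      linarith
    have hB : b ⬝ᵥ d1 = r1 * v 1 := by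
      have := congrFun h1 1
      rw [vadd_eq_add] at this
      simp only [Pi.add_apply, Pi.smul_apply, smul_eq_mul] at this
      rw [hq1 z1, hq1 z0] at this
      rw [hd1def, dotProduct_sub]
      linarith
    have hC : c ⬝ᵥ d2 = rk * v 0 := by
      have := congrFun hk2 0
      rw [vadd_eq_add] at this
      simp only [Pi.add_apply, Pi.smul_apply, smul_eq_mul] at this
      rw [hq0 k, hq0 z0] at this
      rw [hd2def, dotProduct_sub]
      linarith
    have hD : b ⬝ᵥ d2 = rk * v 1 := by
      have := congrFun hk2 1
      rw [vadd_eq_add] at this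
      simp only [Pi.add_apply, Pi.smul_apply, smul_eq_mul] at this
      rw [hq1 k, hq1 z0] at this
      rw [hd2def, dotProduct_sub]
      linarith
    apply hbu
    rw [hudef, dotProduct_sub, dotProduct_smul, dotProduct_smul, smul_eq_mul, smul_eq_mul]
    have hA' : c ⬝ᵥ d1 = r1 * v 0 := by rw [hA]; ring
    rw [hA', hB, hC, hD]
    ring
end

section
/- Let n ≥ 1 and N ≥ 2, and suppose 2^{ℵ₀} ≤ ℵ_n. Then for any n + 2 distinct noncollinear points a_1, ..., a_{n+2} in ℝ^N, there exist clouds C_1, ..., C_{n+2} with C_i a cloud around a_i whose union is ℝ^N. -/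
open Cardinal Function Set

universe u

def FiniteFibersOn {ι P : Type*} {X : ι → Type*} (f : ∀ i, P → X i) (σ : P → ι) (S : Set P) :
    Prop :=
  ∀ i ℓ, {x ∈ S | σ x = i ∧ f i x = ℓ}.Finite

section PairClosure

variable {ι P : Type*} {X : ι → Type*} (f : ∀ i, P → X i)

def IsPairClosed (T : Set P) : Prop :=
  ∀ ⦃i j⦄, i ≠ j → ∀ ⦃x y z⦄, x ∈ T → y ∈ T → f i z = f i x → f j z = f j y → z ∈ T

def pairStep (T : Set P) : Set P :=
  T ∪ {z | ∃ i j, i ≠ j ∧ ∃ x ∈ T, ∃ y ∈ T, f i z = f i x ∧ f j z = f j y}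

def pairClosure (T : Set P) : Set P := ⋃ m : ℕ, (pairStep f)^[m] T

lemma subset_pairStep (T : Set P) : T ⊆ pairStep f T := subset_union_left

lemma pairStep_mono : Monotone (pairStep f) := by
  intro T T' h
  refine union_subset_union h ?_
  rintro z ⟨i, j, hij, x, hx, y, hy, hzx, hzy⟩
  exact ⟨i, j, hij, x, h hx, y, h hy, hzx, hzy⟩

lemma monotone_iterate_pairStep (T : Set P) : Monotone fun m => (pairStep f)^[m] T :=
  monotone_nat_of_le_succ fun m => by
    rw [iterate_succ_apply']
    exact subset_pairStep f _

lemma subset_pairClosure (T : Set P) : T ⊆ pairClosure f T :=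
  subset_iUnion (fun m => (pairStep f)^[m] T) 0

lemma pairClosure_mono : Monotone (pairClosure f) :=
  fun _ _ h => iUnion_mono fun m => (pairStep_mono f).iterate m h

lemma isPairClosed_pairClosure (T : Set P) : IsPairClosed f (pairClosure f T) := by
  intro i j hij x y z hx hy hzx hzy
  obtain ⟨m, hm⟩ := mem_iUnion.1 hx
  obtain ⟨m', hm'⟩ := mem_iUnion.1 hy
  refine mem_iUnion.2 ⟨max m m' + 1, ?_⟩
  rw [iterate_succ_apply']
  exact Or.inr ⟨i, j, hij, x, monotone_iterate_pairStep f T (le_max_left m m') hm,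
    y, monotone_iterate_pairStep f T (le_max_right m m') hm', hzx, hzy⟩

end PairClosure

section PairClosureCard

variable {ι P : Type u} {X : ι → Type*} {f : ∀ i, P → X i} [Finite ι]

lemma mk_pairStep_le (hf : Pairwise fun i j => Injective fun x => (f i x, f j x))
    {μ : Cardinal} (hμ : ℵ₀ ≤ μ) {T : Set P} (hT : #T ≤ μ) : #(pairStep f T) ≤ μ := by
  let Z := {z | ∃ i j, i ≠ j ∧ ∃ x ∈ T, ∃ y ∈ T, f i z = f i x ∧ f j z = f j y}
  have hZ : #Z ≤ #(ι × ι × T × T) := by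
    choose i j hij x hx y hy hzx hzy using fun z : Z => z.2
    refine mk_le_of_injective (f := fun z => (i z, j z, ⟨x z, hx z⟩, ⟨y z, hy z⟩)) ?_
    intro z z' h
    simp only [Prod.mk.injEq, Subtype.mk.injEq] at h
    obtain ⟨hi, hj, hxz, hyz⟩ := h
    refine Subtype.ext (hf (hij z) (Prod.ext ?_ ?_))
    · simp only
      rw [hzx, hxz, hi, ← hzx z']
    · simp only
      rw [hzy, hyz, hj, ← hzy z']
  have hι : #ι ≤ μ := (lt_aleph0_of_finite ι).le.trans hμ
  have hprod : #(ι × ι × T × T) ≤ μ := by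
    simp only [mk_prod, lift_id]
    exact mul_le_of_le hμ hι (mul_le_of_le hμ hι (mul_le_of_le hμ hT hT))
  calc #(pairStep f T) ≤ #T + #Z := mk_union_le _ _
    _ ≤ μ + μ := add_le_add hT (hZ.trans hprod)
    _ = μ := add_eq_self hμ

lemma mk_pairClosure_le (hf : Pairwise fun i j => Injective fun x => (f i x, f j x))
    {μ : Cardinal} (hμ : ℵ₀ ≤ μ) {T : Set P} (hT : #T ≤ μ) : #(pairClosure f T) ≤ μ := by
  have hiter : ∀ m : ℕ, #((pairStep f)^[m] T) ≤ μ := by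
    intro m
    induction m with
    | zero => exact hT
    | succ m ih =>
      rw [iterate_succ_apply']
      exact mk_pairStep_le hf hμ ih
  calc #(pairClosure f T) ≤ ℵ₀ * ⨆ m, #((pairStep f)^[m] T) := by
        simpa [pairClosure] using mk_iUnion_le_lift fun m : ℕ => (pairStep f)^[m] T
    _ ≤ μ := mul_le_of_le hμ hμ (ciSup_le' hiter)

end PairClosureCard

section Filtration

variable {ι : Type*} {P : Type u} {X : ι → Type*} (F : Ordinal.{u} → Set P) (f : ∀ i, P → X i)

noncomputable def stage (x : P) : Ordinal.{u} := sInf {α | x ∈ F α}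

def FiberMeetsEarlierStage (i : ι) (x : P) : Prop := ∃ β < stage F x, ∃ y ∈ F β, f i y = f i x

/-- Arbitrary when no fibre of `x` meets an earlier stage. -/
noncomputable def earlierStageIndex [Nonempty ι] (x : P) : ι :=
  Classical.epsilon fun i => FiberMeetsEarlierStage F f i x

variable {F f}

lemma mem_stage {x : P} {α : Ordinal} (h : x ∈ F α) : x ∈ F (stage F x) :=
  csInf_mem (s := {α | x ∈ F α}) ⟨α, h⟩

lemma stage_le {x : P} {α : Ordinal} (h : x ∈ F α) : stage F x ≤ α := csInf_le' h

lemma notMem_of_lt_stage {x : P} {α : Ordinal} (h : α < stage F x) : x ∉ F α :=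
  notMem_of_lt_csInf' (s := {α | x ∈ F α}) h

lemma FiberMeetsEarlierStage.eq (hmono : Monotone F) (hclosed : ∀ α, IsPairClosed f (F α))
    {i j : ι} {x : P} (hi : FiberMeetsEarlierStage F f i x) (hj : FiberMeetsEarlierStage F f j x) :
    i = j := by
  by_contra hij
  obtain ⟨β, hβ, y, hy, hyx⟩ := hi
  obtain ⟨β', hβ', y', hy', hyx'⟩ := hj
  exact notMem_of_lt_stage (max_lt hβ hβ') <| hclosed _ hij (hmono (le_max_left β β') hy)
    (hmono (le_max_right β β') hy') hyx.symm hyx'.symm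

variable [Nonempty ι]

lemma earlierStageIndex_eq (hmono : Monotone F) (hclosed : ∀ α, IsPairClosed f (F α)) {i : ι}
    {x : P} (h : FiberMeetsEarlierStage F f i x) : earlierStageIndex F f x = i :=
  (Classical.epsilon_spec (p := fun i => FiberMeetsEarlierStage F f i x) ⟨i, h⟩).eq hmono hclosed h

lemma stage_eq_of_apply_eq (hmono : Monotone F) (hclosed : ∀ α, IsPairClosed f (F α)) {i : ι}
    {x x' : P} {α α' : Ordinal} (hx : x ∈ F α) (hx' : x' ∈ F α')
    (hix : earlierStageIndex F f x ≠ i) (hix' : earlierStageIndex F f x' ≠ i) (h : f i x = f i x') :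
    stage F x = stage F x' := by
  have key : ∀ {y y' : P} {β : Ordinal}, y ∈ F β → earlierStageIndex F f y' ≠ i →
      f i y = f i y' → ¬stage F y < stage F y' := fun hy hiy' hyy' hlt =>
    hiy' (earlierStageIndex_eq hmono hclosed ⟨_, hlt, _, mem_stage hy, hyy'⟩)
  exact le_antisymm (not_lt.1 (key hx' hix h.symm)) (not_lt.1 (key hx hix' h))

theorem exists_finiteFibersOn_of_filtration [Finite ι] (hmono : Monotone F)
    (hclosed : ∀ α, IsPairClosed f (F α)) {μ : Cardinal.{u}} {S : Set P}
    (hS : ∀ x ∈ S, ∃ α, x ∈ F α ∧ #(F α) ≤ μ) {I : Finset ι}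
    (h : ∀ T : Set P, #T ≤ μ → ∀ c : ι,
      ∃ σ : P → ι, (∀ x ∈ T, σ x ∈ I ∧ σ x ≠ c) ∧ FiniteFibersOn f σ T) :
    ∃ σ : P → ι, (∀ x ∈ S, σ x ∈ I) ∧ FiniteFibersOn f σ S := by
  have mem_stage_of_mem : ∀ x ∈ S, x ∈ F (stage F x) := fun x hx =>
    (hS x hx).elim fun _ h => mem_stage h.1
  let T (α : Ordinal) (c : ι) := {x ∈ S | stage F x = α ∧ earlierStageIndex F f x = c}
  have hT : ∀ α c, #(T α c) ≤ μ := by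
    intro α c
    rcases (T α c).eq_empty_or_nonempty with he | ⟨x, hxS, rfl, -⟩
    · simp [he]
    obtain ⟨β, hxβ, hβ⟩ := hS x hxS
    refine (mk_le_mk_of_subset ?_).trans hβ
    rintro y ⟨hyS, hy, -⟩
    exact hmono (stage_le hxβ) (hy ▸ mem_stage_of_mem y hyS)
  choose σ hσ hσfin using fun α c => h (T α c) (hT α c) c
  let τ (x : P) := σ (stage F x) (earlierStageIndex F f x) x
  have hτ : ∀ x ∈ S, τ x ∈ I ∧ τ x ≠ earlierStageIndex F f x :=
    fun x hx => hσ _ _ x ⟨hx, rfl, rfl⟩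
  refine ⟨τ, fun x hx => (hτ x hx).1, fun i ℓ => ?_⟩
  rcases eq_empty_or_nonempty {x ∈ S | τ x = i ∧ f i x = ℓ} with he | ⟨x₀, hx₀S, hx₀i, hx₀ℓ⟩
  · simp [he]
  refine (finite_iUnion fun c => hσfin (stage F x₀) c i ℓ).subset ?_
  rintro x ⟨hxS, hxi, hxℓ⟩
  have hstage : stage F x = stage F x₀ :=
    stage_eq_of_apply_eq hmono hclosed (mem_stage_of_mem x hxS) (mem_stage_of_mem x₀ hx₀S)
      (hxi ▸ (hτ x hxS).2.symm) (hx₀i ▸ (hτ x₀ hx₀S).2.symm) (hxℓ.trans hx₀ℓ.symm)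
  exact mem_iUnion.2 ⟨earlierStageIndex F f x, ⟨hxS, hstage, rfl⟩, hstage ▸ hxi, hxℓ⟩

end Filtration

lemma exists_ordinal_rank_mk_le {α : Type u} {μ : Cardinal.{u}} (hμ : ℵ₀ ≤ μ)
    (h : #α ≤ Order.succ μ) : ∃ ρ : α → Ordinal.{u}, ∀ a, #{b | ρ b ≤ ρ a} ≤ μ := by
  obtain ⟨r, _, hr⟩ := exists_ord_eq α
  refine ⟨Ordinal.typein r, fun a => ?_⟩
  have hlt : #{b // r b a} ≤ μ := by
    rw [← Ordinal.card_typein]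
    exact Order.lt_succ_iff.1 ((card_typein_lt a hr).trans_le h)
  have hsub : {b | Ordinal.typein r b ≤ Ordinal.typein r a} ⊆ insert a {b | r b a} := by
    intro b hb
    rcases (show Ordinal.typein r b ≤ Ordinal.typein r a from hb).lt_or_eq with hb | hb
    · exact Or.inr ((Ordinal.typein_lt_typein r).1 hb)
    · exact Or.inl (Ordinal.typein_injective r hb)
  calc #{b | Ordinal.typein r b ≤ Ordinal.typein r a} ≤ #{b | r b a} + 1 :=
        (mk_le_mk_of_subset hsub).trans mk_insert_le
    _ ≤ μ + 1 := add_le_add hlt le_rfl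
    _ = μ := add_one_eq hμ

section Countable

variable {ι P : Type*} {X : ι → Type*} {f : ∀ i, P → X i} {S : Set P} {g : P → ℕ}

variable (f S g) in
noncomputable def fiberRank (i : ι) (ℓ : X i) : ℕ := sInf (g '' {y ∈ S | f i y = ℓ})

lemma fiberRank_mem {i : ι} {x : P} (hx : x ∈ S) :
    fiberRank f S g i (f i x) ∈ g '' {y ∈ S | f i y = f i x} :=
  Nat.sInf_mem ⟨g x, x, ⟨hx, rfl⟩, rfl⟩

lemma apply_eq_of_fiberRank_eq (hg : InjOn g S) {i : ι} {x y : P} (hx : x ∈ S) (hy : y ∈ S)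
    (h : fiberRank f S g i (f i x) = fiberRank f S g i (f i y)) : f i x = f i y := by
  obtain ⟨z, ⟨hzS, hzx⟩, hz⟩ := fiberRank_mem (f := f) (g := g) (i := i) hx
  obtain ⟨z', ⟨hz'S, hz'y⟩, hz'⟩ := fiberRank_mem (f := f) (g := g) (i := i) hy
  rw [← hzx, ← hz'y, hg hzS hz'S (hz.trans (h.trans hz'.symm))]

lemma finite_setOf_fiberRank_le (hf : Pairwise fun i j => Injective fun x => (f i x, f j x))
    (hg : InjOn g S) {i j : ι} (hij : i ≠ j) (ℓ : X i) (m : ℕ) :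
    {x ∈ S | f i x = ℓ ∧ fiberRank f S g j (f j x) ≤ m}.Finite := by
  refine Finite.of_injOn (f := fun x => fiberRank f S g j (f j x)) (t := Iic m)
    (fun x hx => hx.2.2) (fun x hx y hy hxy => ?_) (finite_Iic m)
  exact hf hij (Prod.ext (hx.2.1.trans hy.2.1.symm) (apply_eq_of_fiberRank_eq hg hx.1 hy.1 hxy))

theorem exists_finiteFibersOn_of_countable
    (hf : Pairwise fun i j => Injective fun x => (f i x, f j x)) {i₁ i₂ : ι} (hne : i₁ ≠ i₂)
    (hS : S.Countable) : ∃ σ : P → ι, (∀ x, σ x = i₁ ∨ σ x = i₂) ∧ FiniteFibersOn f σ S := by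
  classical
  obtain ⟨g, hg⟩ := countable_iff_exists_injOn.1 hS
  let r (i : ι) (x : P) := fiberRank f S g i (f i x)
  let σ (x : P) := if r i₂ x ≤ r i₁ x then i₁ else i₂
  refine ⟨σ, fun x => by unfold σ; split_ifs <;> simp, fun i ℓ => ?_⟩
  obtain ⟨j, hij, hj⟩ : ∃ j, i ≠ j ∧ ∀ x, σ x = i → r j x ≤ r i x := by
    by_cases hi : i = i₁
    · subst hi
      refine ⟨i₂, hne, fun x hx => ?_⟩
      by_contra hlt
      exact hne (by simpa [σ, hlt] using hx.symm)
    · refine ⟨i₁, hi, fun x hx => ?_⟩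
      by_cases hle : r i₂ x ≤ r i₁ x
      · exact absurd (by simpa [σ, hle] using hx.symm) hi
      · simp only [σ, hle, if_false] at hx
        exact hx ▸ (not_le.1 hle).le
  refine (finite_setOf_fiberRank_le hf hg hij ℓ (fiberRank f S g i ℓ)).subset ?_
  rintro x ⟨hxS, hσx, rfl⟩
  exact ⟨hxS, rfl, hj x hσx⟩

end Countable

theorem exists_finiteFibersOn_of_mk_le_aleph {ι P : Type u} [Finite ι] {X : ι → Type*}
    {f : ∀ i, P → X i} (hf : Pairwise fun i j => Injective fun x => (f i x, f j x)) (k : ℕ)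
    {I : Finset ι} (hI : k + 2 ≤ I.card) {S : Set P} (hS : #S ≤ ℵ_ k) :
    ∃ σ : P → ι, (∀ x ∈ S, σ x ∈ I) ∧ FiniteFibersOn f σ S := by
  classical
  induction k generalizing I S with
  | zero =>
    obtain ⟨i₁, h₁, i₂, h₂, hne⟩ := Finset.one_lt_card.1 (by omega : 1 < I.card)
    obtain ⟨σ, hσ, hfin⟩ := exists_finiteFibersOn_of_countable hf hne
      (le_aleph0_iff_set_countable.1 (by simpa using hS))
    exact ⟨σ, fun x _ => (hσ x).elim (· ▸ h₁) (· ▸ h₂), hfin⟩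
  | succ k ih =>
    have : Nonempty ι := ⟨(Finset.card_pos.1 (by omega : 0 < I.card)).choose⟩
    rw [Nat.cast_succ, ← succ_aleph] at hS
    obtain ⟨ρ, hρ⟩ := exists_ordinal_rank_mk_le (aleph0_le_aleph k) hS
    refine exists_finiteFibersOn_of_filtration
      (F := fun β => pairClosure f (Subtype.val '' {y : S | ρ y ≤ β}))
      (fun _ _ h => pairClosure_mono f (image_mono fun y hy => le_trans hy h))
      (fun _ => isPairClosed_pairClosure f _)
      (fun x hx => ⟨ρ ⟨x, hx⟩, subset_pairClosure f _ ⟨⟨x, hx⟩, le_refl (ρ ⟨x, hx⟩), rfl⟩,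
        mk_pairClosure_le hf (aleph0_le_aleph k) (mk_image_le.trans (hρ _))⟩)
      fun T hT c => ?_
    obtain ⟨σ, hσ, hfin⟩ := ih (I := I.erase c)
      (by have := Finset.pred_card_le_card_erase (s := I) (a := c); omega) hT
    exact ⟨σ, fun x hx => (Finset.mem_erase.1 (hσ x hx)).symm, hfin⟩

section Geometry

variable {ι k V P : Type*} [DivisionRing k] [AddCommGroup V] [Module k V] [AddTorsor V P]

lemma eq_of_affineSpan_pair_eq {a b x y : P} (hab : a ≠ b) (hx : x ∉ line[k, a, b])
    (ha : line[k, a, x] = line[k, a, y]) (hb : line[k, b, x] = line[k, b, y]) : x = y := by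
  by_contra hxy
  have hya : line[k, y, x] = line[k, a, x] :=
    affineSpan_pair_eq_of_left_mem_of_ne (ha ▸ right_mem_affineSpan_pair k a y) (Ne.symm hxy)
  have hyb : line[k, y, x] = line[k, b, x] :=
    affineSpan_pair_eq_of_left_mem_of_ne (hb ▸ right_mem_affineSpan_pair k b y) (Ne.symm hxy)
  have hb_mem : b ∈ line[k, a, x] := hya ▸ hyb ▸ left_mem_affineSpan_pair k b x
  exact hx (affineSpan_pair_eq_of_right_mem_of_ne hb_mem hab.symm ▸ right_mem_affineSpan_pair k a x)

lemma subsingleton_inter_affineSpan_pair {a b p q : P} (h : a ∉ line[k, p, q]) :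
    ((line[k, a, b] : Set P) ∩ line[k, p, q]).Subsingleton := by
  rintro x ⟨hx, hx'⟩ y ⟨hy, hy'⟩
  by_contra hxy
  apply h
  rw [← affineSpan_pair_eq_of_mem_of_mem_of_ne hx' hy' hxy,
    affineSpan_pair_eq_of_mem_of_mem_of_ne hx hy hxy]
  exact left_mem_affineSpan_pair k a b

lemma collinear_of_subset_affineSpan_pair {s : Set P} {p q : P} (h : s ⊆ line[k, p, q]) :
    Collinear k s :=
  (Submodule.rank_mono ((vectorSpan_mono k h).trans_eq (direction_affineSpan k _))).trans
    (collinear_pair k p q)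

lemma exists_notMem_affineSpan_pair {a : ι → P} (h : ¬Collinear k (range a)) (p q : P) :
    ∃ c, a c ∉ line[k, p, q] := by
  by_contra! hall
  exact h (collinear_of_subset_affineSpan_pair (range_subset_iff.2 hall))

end Geometry

theorem exists_clouds_of_mk_le_aleph {ι : Type u} [Fintype ι] {k V : Type*} {P : Type u}
    [DivisionRing k] [AddCommGroup V] [Module k V] [AddTorsor V P] {n : ℕ}
    (hι : n + 2 ≤ Fintype.card ι) (hP : #P ≤ ℵ_ n) {a : ι → P} (ha : Injective a)
    (hcol : ¬Collinear k (range a)) :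
    ∃ C : ι → Set P, (∀ i, ∀ b ≠ a i, ((line[k, a i, b] : Set P) ∩ C i).Finite) ∧
      ⋃ i, C i = Set.univ := by
  have : Nontrivial ι := Fintype.one_lt_card_iff_nontrivial.1 (by omega)
  let Q := {x : P // ∀ i j, i ≠ j → x ∉ line[k, a i, a j]}
  have hQ : ∀ (x : Q) i, x.1 ≠ a i := fun x i hx =>
    let ⟨j, hj⟩ := exists_ne i
    x.2 i j hj.symm (hx ▸ left_mem_affineSpan_pair k _ _)
  have hf : Pairwise fun i j => Injective fun x : Q => (line[k, a i, x.1], line[k, a j, x.1]) :=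
    fun i j hij x y hxy => Subtype.ext (eq_of_affineSpan_pair_eq (ha.ne hij) (x.2 i j hij)
      (congrArg Prod.fst hxy) (congrArg Prod.snd hxy))
  obtain ⟨σ, -, hσ⟩ := exists_finiteFibersOn_of_mk_le_aleph hf n (I := Finset.univ)
    (by simpa using hι) (S := univ) (by simpa using (mk_subtype_le _).trans hP)
  choose c hc using fun p : ι × ι => exists_notMem_affineSpan_pair hcol (a p.1) (a p.2)
  refine ⟨fun m => Subtype.val '' {x | σ x = m} ∪
    ⋃ p ∈ {p : ι × ι | p.1 ≠ p.2 ∧ c p = m}, line[k, a p.1, a p.2], fun m b hb => ?_, ?_⟩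
  · rw [inter_union_distrib_left, inter_iUnion₂]
    refine (((hσ m line[k, a m, b]).image Subtype.val).subset ?_).union
      ((toFinite _).biUnion fun p hp => (subsingleton_inter_affineSpan_pair (hp.2 ▸ hc p)).finite)
    rintro _ ⟨hxL, x, hx, rfl⟩
    exact ⟨x, ⟨mem_univ x, hx, affineSpan_pair_eq_of_right_mem_of_ne hxL (hQ x m)⟩, rfl⟩
  · refine eq_univ_of_forall fun x => ?_
    by_cases hx : ∃ i j, i ≠ j ∧ x ∈ line[k, a i, a j]
    · obtain ⟨i, j, hij, hx⟩ := hx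
      exact mem_iUnion.2 ⟨c (i, j), Or.inr (mem_biUnion (x := (i, j)) ⟨hij, rfl⟩ hx)⟩
    · push Not at hx
      exact mem_iUnion.2 ⟨σ ⟨x, hx⟩, Or.inl ⟨⟨x, hx⟩, rfl, rfl⟩⟩

lemma isCloudAround_of_finite_inter {V : Type*} [AddCommGroup V] [Module ℝ V] {a : V} {C : Set V}
    (h : ∀ b ≠ a, ((line[ℝ, a, b] : Set V) ∩ C).Finite) : IsCloudAround a C := by
  intro v hv
  refine (h (a + v) (by simpa using hv)).subset (inter_subset_inter_left _ ?_)
  rintro _ ⟨t, rfl⟩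
  have h := AffineMap.lineMap_mem_affineSpan_pair t a (a + v)
  rwa [AffineMap.lineMap_apply_module', add_sub_cancel_left, add_comm (t • v)] at h

theorem clouds_at_points_of_continuum_le_aleph_general (n N : ℕ)
    (hcard : Cardinal.continuum ≤ Cardinal.aleph n)
    (a : Fin (n + 2) → (Fin N → ℝ)) (ha : Function.Injective a)
    (hcol : ¬ Collinear ℝ (Set.range a)) :
    ∃ C : Fin (n + 2) → Set (Fin N → ℝ),
      (∀ i, IsCloudAround (a i) (C i)) ∧ (⋃ i, C i) = Set.univ := by
  have hcard₀ : continuum.{0} ≤ aleph.{0} n := by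
    rw [← lift_le]
    simpa using hcard
  have hV : #(Fin N → ℝ) ≤ ℵ_ n := by
    simpa [mk_real] using (power_nat_le aleph0_le_continuum).trans hcard₀
  obtain ⟨C, hC, hcover⟩ := exists_clouds_of_mk_le_aleph (by simp) hV ha hcol
  exact ⟨C, fun i => isCloudAround_of_finite_inter (hC i), hcover⟩

theorem clouds_at_points_of_continuum_le_aleph (n N : ℕ) (hn : 1 ≤ n) (hN : 2 ≤ N)
    (hcard : Cardinal.continuum ≤ Cardinal.aleph n)
    (a : Fin (n + 2) → (Fin N → ℝ)) (ha : Function.Injective a)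
    (hcol : ¬ Collinear ℝ (Set.range a)) :
    ∃ C : Fin (n + 2) → Set (Fin N → ℝ),
      (∀ i, IsCloudAround (a i) (C i)) ∧ (⋃ i, C i) = Set.univ :=
  clouds_at_points_of_continuum_le_aleph_general n N hcard a ha hcol
end

section
/- Suppose n < ω and X is any set. Then |X| ≤ ℵ_n if and only if there exist sets D_1, ..., D_{n+2} ⊆ X^{n+2} whose union is X^{n+2}, such that for every 1 ≤ i ≤ n + 2 and every line ℓ ⊆ X^{n+2} parallel to the i-th coordinate axis, the intersection D_i ∩ ℓ is finite. -/
/-!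
Both directions go by induction on the dimension, in the form: `X^(N+1)` admits such a
decomposition iff `#X < ℵ_N` (for `N = 0` this says `X` is finite).

Upwards, well-order `X` in type `ω_N`. For a point `p` whose `i`-th coordinate is maximal, the
other coordinates lie in the initial segment `Iic (p i)`, of size `< ℵ_N`, whose cube has a
decomposition by induction; put `p` into the piece indexed by the direction that the
decomposition of `Iic (p i)` assigns to `p` with coordinate `i` deleted. On a line in
direction `j ≠ i` the coordinate `p i` is fixed, so finiteness is inherited.

Downwards, if `#X > ℵ_N`, take `A ⊆ X` with `#A = ℵ_N`. The lines in direction `0` through the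
`ℵ_N` points of `A^(N+1)` meet `D 0` in at most `ℵ_N` points, so some `b` avoids them all, and
the slice `{b} × A^(N+1)` is covered by the remaining `N + 1` pieces; by induction `#A < ℵ_N`.
-/

open Set Function Cardinal

universe u v

theorem lt_aleph_natCast_succ_iff {c : Cardinal} {n : ℕ} : c < ℵ_ ↑(n + 1) ↔ c ≤ ℵ_ n := by
  rw [Nat.cast_succ, ← succ_aleph, Order.lt_succ_iff]

theorem exists_notMem_iUnion_of_mk_mul_aleph0_lt {ι X : Type u} {F : ι → Set X}
    (hF : ∀ i, (F i).Finite) (h : #ι * ℵ₀ < #X) : ∃ x, x ∉ ⋃ i, F i := by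
  by_contra! hX
  have : #X ≤ #ι * ℵ₀ := calc
    #X = #(⋃ i, F i) := by rw [eq_univ_of_forall hX, mk_univ]
    _ ≤ #ι * ⨆ i, #(F i) := mk_iUnion_le F
    _ ≤ #ι * ℵ₀ := by gcongr; exact ciSup_le' fun i => (hF i).lt_aleph0.le
  exact this.not_gt h

section

variable {X : Type u} {Y : Type v} {N : ℕ}

def axisLine (i : Fin N) (a : Fin N → X) : Set (Fin N → X) :=
  {p | ∀ j, j ≠ i → p j = a j}

def HasFiniteLineCover (S : Set (Fin N → X)) : Prop :=
  ∃ D : Fin N → Set (Fin N → X), S ⊆ ⋃ i, D i ∧ ∀ i a, (D i ∩ axisLine i a).Finite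

theorem HasFiniteLineCover.mono {S T : Set (Fin N → X)} (h : HasFiniteLineCover S)
    (hTS : T ⊆ S) : HasFiniteLineCover T :=
  let ⟨D, hD, hfin⟩ := h
  ⟨D, hTS.trans hD, hfin⟩

theorem HasFiniteLineCover.preimage_comp {S : Set (Fin N → Y)} (h : HasFiniteLineCover S)
    {f : X → Y} (hf : Injective f) : HasFiniteLineCover ((f ∘ ·) ⁻¹' S) := by
  obtain ⟨D, hD, hfin⟩ := h
  refine ⟨fun i => (f ∘ ·) ⁻¹' D i, fun p hp => by simpa using hD hp, fun i a => ?_⟩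
  refine ((hfin i (f ∘ a)).preimage (hf.comp_left.injOn)).subset ?_
  rintro p ⟨hp, hline⟩
  exact ⟨hp, fun j hj => congrArg f (hline j hj)⟩

theorem HasFiniteLineCover.pi_range {f : Y → X} (hf : Injective f)
    (h : HasFiniteLineCover (univ : Set (Fin N → Y))) :
    HasFiniteLineCover (univ.pi fun _ : Fin N => range f) := by
  obtain ⟨D, hD, hfin⟩ := h
  refine ⟨fun i => (f ∘ ·) '' D i, fun p hp => ?_, fun i a => ?_⟩
  · choose q hq using mem_univ_pi.1 hp
    obtain ⟨i, hi⟩ := mem_iUnion.1 (hD (mem_univ q))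
    exact mem_iUnion.2 ⟨i, q, hi, funext hq⟩
  · rcases ((f ∘ ·) '' D i ∩ axisLine i a).eq_empty_or_nonempty with h | ⟨_, ⟨q₀, -, rfl⟩, hq₀⟩
    · simp [h]
    · refine ((hfin i q₀).image (f ∘ ·)).subset ?_
      rintro _ ⟨⟨q, hq, rfl⟩, hqline⟩
      exact ⟨q, ⟨hq, fun j hj => hf ((hqline j hj).trans (hq₀ j hj).symm)⟩, rfl⟩

theorem hasFiniteLineCover_univ_one_iff :
    HasFiniteLineCover (univ : Set (Fin 1 → X)) ↔ Finite X := by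
  refine ⟨fun ⟨D, hD, hfin⟩ => ?_, fun _ =>
    ⟨fun _ => univ, fun _ _ => mem_iUnion.2 ⟨0, trivial⟩, fun _ _ => toFinite _⟩⟩
  have : Finite (Fin 1 → X) := by
    refine finite_univ_iff.1 ?_
    rcases isEmpty_or_nonempty (Fin 1 → X) with _ | ⟨⟨a⟩⟩
    · exact finite_univ
    refine (hfin 0 a).subset fun p _ => ⟨?_, fun j hj => absurd (Subsingleton.elim j 0) hj⟩
    obtain ⟨i, hi⟩ := mem_iUnion.1 (hD (mem_univ p))
    rwa [Subsingleton.elim i 0] at hi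
  exact Finite.of_equiv _ (Equiv.funUnique (Fin 1) X)

theorem mapsTo_comp_succAbove_axisLine (i : Fin (N + 1)) (k : Fin N) (a : Fin (N + 1) → X) :
    MapsTo (· ∘ i.succAbove) (axisLine (i.succAbove k) a) (axisLine k (a ∘ i.succAbove)) :=
  fun _ hp _ hj => hp _ (i.succAbove_right_injective.ne hj)

theorem injOn_comp_succAbove_axisLine (i : Fin (N + 1)) (k : Fin N) (a : Fin (N + 1) → X) :
    InjOn (· ∘ i.succAbove) (axisLine (i.succAbove k) a) := by
  intro p hp q hq hpq
  funext m
  cases m using i.succAboveCases with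
  | x => exact (hp i (i.succAbove_ne k).symm).trans (hq i (i.succAbove_ne k).symm).symm
  | p m => exact congrFun hpq m

theorem mapsTo_cons_axisLine (b : X) (k : Fin N) (a : Fin N → X) :
    MapsTo (Fin.cons b) (axisLine k a) (axisLine k.succ (Fin.cons b a : Fin (N + 1) → X)) := by
  intro q hq j hj
  cases j using Fin.cases with
  | zero => rfl
  | succ j => exact hq j (fun h => hj (congrArg Fin.succ h))

theorem hasFiniteLineCover_univ_of_forall_Iic [LinearOrder X]
    (h : ∀ x : X, HasFiniteLineCover (univ.pi fun _ : Fin (N + 1) => Iic x)) :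
    HasFiniteLineCover (univ : Set (Fin (N + 2) → X)) := by
  choose E hE hEfin using h
  refine ⟨fun j => {p | ∃ i k, i.succAbove k = j ∧ p ∘ i.succAbove ∈ E (p i) k}, ?_, ?_⟩
  · intro p _
    obtain ⟨i, hi⟩ := Finite.exists_max p
    obtain ⟨k, hk⟩ := mem_iUnion.1 (hE (p i) (mem_univ_pi.2 fun m => hi _))
    exact mem_iUnion.2 ⟨i.succAbove k, i, k, rfl, hk⟩
  · intro j a
    have hsub : {p | ∃ i k, i.succAbove k = j ∧ p ∘ i.succAbove ∈ E (p i) k} ∩ axisLine j a ⊆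
        ⋃ i, ⋃ k, axisLine (i.succAbove k) a ∩ (· ∘ i.succAbove) ⁻¹' E (a i) k := by
      rintro p ⟨⟨i, k, rfl, hp⟩, hline⟩
      rw [hline i (i.succAbove_ne k).symm] at hp
      exact mem_iUnion₂.2 ⟨i, k, hline, hp⟩
    refine (finite_iUnion fun i => finite_iUnion fun k => ?_).subset hsub
    exact Finite.of_injOn (t := E (a i) k ∩ axisLine k (a ∘ i.succAbove))
      (fun p hp => ⟨hp.2, mapsTo_comp_succAbove_axisLine i k a hp.1⟩)
      ((injOn_comp_succAbove_axisLine i k a).mono inter_subset_left)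
      (hEfin (a i) k (a ∘ i.succAbove))

theorem HasFiniteLineCover.of_univ_succ {S : Set (Fin (N + 1) → X)}
    (h : HasFiniteLineCover (univ : Set (Fin (N + 2) → X))) (hS : #S * ℵ₀ < #X) :
    HasFiniteLineCover S := by
  obtain ⟨D, hD, hfin⟩ := h
  have hfiber (q : Fin (N + 1) → X) : {b | Fin.cons b q ∈ D 0}.Finite := by
    refine Finite.of_injOn (t := D 0 ∩ axisLine 0 (Fin.cons (q 0) q))
      (fun b hb => ⟨hb, fun j hj => ?_⟩) (Fin.cons_left_injective (α := fun _ => X) q).injOn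
      (hfin 0 _)
    obtain ⟨j, rfl⟩ := Fin.exists_succ_eq.2 hj
    rfl
  obtain ⟨b, hb⟩ := exists_notMem_iUnion_of_mk_mul_aleph0_lt (fun q : S => hfiber q) hS
  refine ⟨fun k => {q | Fin.cons b q ∈ D k.succ}, fun q hq => ?_, fun k a => ?_⟩
  · obtain ⟨i, hi⟩ := mem_iUnion.1 (hD (mem_univ (Fin.cons b q)))
    cases i using Fin.cases with
    | zero => exact absurd (mem_iUnion.2 ⟨⟨q, hq⟩, hi⟩) hb
    | succ k => exact mem_iUnion.2 ⟨k, hi⟩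
  · exact Finite.of_injOn (t := D k.succ ∩ axisLine k.succ (Fin.cons b a))
      (fun q hq => ⟨hq.1, mapsTo_cons_axisLine b k a hq.2⟩)
      (Fin.cons_right_injective (α := fun _ => X) b).injOn (hfin k.succ (Fin.cons b a))

end

theorem mk_lt_aleph_of_hasFiniteLineCover {X : Type u} {N : ℕ}
    (h : HasFiniteLineCover (univ : Set (Fin (N + 1) → X))) : #X < ℵ_ N := by
  induction N generalizing X with
  | zero => simpa [lt_aleph0_iff_finite] using hasFiniteLineCover_univ_one_iff.1 h
  | succ N ih =>
    by_contra! hX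
    obtain ⟨A, hA⟩ := le_mk_iff_exists_set.1 ((lt_aleph_natCast_succ_iff.2 le_rfl).le.trans hX)
    have hcube : #(univ.pi fun _ : Fin (N + 1) => A) * ℵ₀ < #X := by
      have hN := aleph0_le_aleph N
      rw [mk_congr (Equiv.Set.univPi _)]
      simp only [mk_pi, prod_const, hA, mk_fin, lift_natCast, lift_uzero, power_natCast]
      rw [power_nat_eq hN N.succ_pos, mul_aleph0_eq hN]
      exact (lt_aleph_natCast_succ_iff.2 le_rfl).trans_le hX
    have hA_cover :=
      (h.of_univ_succ hcube).preimage_comp (f := ((↑) : A → X)) Subtype.val_injective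
    exact (hA ▸ ih (hA_cover.mono fun q _ => mem_univ_pi.2 fun m => (q m).2)).false

theorem hasFiniteLineCover_of_mk_lt_aleph {X : Type u} {N : ℕ} (h : #X < ℵ_ N) :
    HasFiniteLineCover (univ : Set (Fin (N + 1) → X)) := by
  induction N generalizing X with
  | zero => exact hasFiniteLineCover_univ_one_iff.2 (lt_aleph0_iff_finite.1 (by simpa using h))
  | succ N ih =>
    have hIic (w : (aleph.{u} N).ord.ToType) :
        HasFiniteLineCover (univ.pi fun _ : Fin (N + 1) => Iic w) := by
      have hIio : #(Iio w) < ℵ_ N := by simpa using mk_Iio_lt w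
      have : #(Iic w) < ℵ_ N := by
        rw [← Iio_insert]
        exact mk_insert_le.trans_lt (add_lt_of_lt (aleph0_le_aleph N) hIio
          (one_lt_aleph0.trans_le (aleph0_le_aleph N)))
      have := (ih this).pi_range Subtype.val_injective
      rwa [Subtype.range_coe] at this
    obtain ⟨f⟩ : Nonempty (X ↪ (aleph.{u} N).ord.ToType) := by
      rw [← le_def, mk_ord_toType]
      exact lt_aleph_natCast_succ_iff.1 h
    exact (hasFiniteLineCover_univ_of_forall_Iic hIic).preimage_comp f.injective

theorem kuratowski_covering (n : ℕ) (X : Type*) :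
    Cardinal.mk X ≤ Cardinal.aleph n ↔
      ∃ D : Fin (n + 2) → Set (Fin (n + 2) → X),
        (⋃ i, D i) = Set.univ ∧
        ∀ (i : Fin (n + 2)) (a : Fin (n + 2) → X),
          (D i ∩ {p : Fin (n + 2) → X | ∀ j, j ≠ i → p j = a j}).Finite := by
  rw [← lt_aleph_natCast_succ_iff]
  constructor
  · intro h
    obtain ⟨D, hD, hfin⟩ := hasFiniteLineCover_of_mk_lt_aleph h
    exact ⟨D, univ_subset_iff.1 hD, hfin⟩
  · rintro ⟨D, hD, hfin⟩
    exact mk_lt_aleph_of_hasFiniteLineCover ⟨D, hD.symm.subset, hfin⟩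
end
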